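/- Let φ ∈ ℝ be fixed, Δt > 0 fixed, and define B(ε) := 1/(ε(1+εφ)) − (ε/(Δt(1+εφ)²))(1 − exp(−(1+εφ)Δt/ε²)). Then B(ε) − 1/ε → −φ as ε → 0⁺, i.e. B(ε) = 1/ε − φ + O(ε). -/

import Mathlib

open Filter

/-- the UGKS coefficient B satisfies B(ε) - 1/ε → -φ as ε → 0⁺. -/
theorem coeff_B_expansion (φ Δt : ℝ) (hΔt : 0 < Δt)
    (B : ℝ → ℝ)
    (hB : ∀ ε, B ε = 1 / (ε * (1 + ε * φ)) -
        (ε / (Δt * (1 + ε * φ)^2)) * (1 - Real.exp (-(1 + ε * φ) * Δt / ε^2))) :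
    Tendsto (fun ε => B ε - 1/ε) (nhdsWithin 0 (Set.Ioi 0)) (nhds (-φ)) := by
  set l := nhdsWithin (0:ℝ) (Set.Ioi 0) with hl
  have h1 : Tendsto (fun ε : ℝ => 1 + ε * φ) l (nhds 1) := by
    have : Tendsto (fun ε : ℝ => 1 + ε * φ) (nhds 0) (nhds 1) := by
      have hc : Continuous (fun ε : ℝ => 1 + ε * φ) := by continuity
      simpa using hc.tendsto 0
    exact this.mono_left nhdsWithin_le_nhds
  have hposd : ∀ᶠ ε in l, 0 < 1 + ε * φ := h1.eventually (eventually_gt_nhds zero_lt_one)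
  have hεpos : ∀ᶠ ε in l, 0 < ε := eventually_mem_nhdsWithin
  -- the comparison function
  have heq : (fun ε => B ε - 1/ε) =ᶠ[l]
      (fun ε => -φ / (1 + ε * φ) -
        (ε / (Δt * (1 + ε * φ)^2)) * (1 - Real.exp (-(1 + ε * φ) * Δt / ε^2))) := by
    filter_upwards [hposd, hεpos] with ε hd hε
    rw [hB]
    have hε' : ε ≠ 0 := ne_of_gt hε
    have hd' : (1 + ε * φ) ≠ 0 := ne_of_gt hd
    field_simp
    ring
  rw [show (-φ : ℝ) = -φ / (1 + 0) - (0 / (Δt * 1^2)) * (1 - 0) by norm_num]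
  refine Tendsto.congr' heq.symm (Tendsto.sub ?_ (Tendsto.mul ?_ ?_))
  · have h1' : Tendsto (fun ε : ℝ => 1 + ε * φ) l (nhds (1 + 0)) := by simpa using h1
    exact tendsto_const_nhds.div h1' (by norm_num)
  · refine Tendsto.div (tendsto_nhdsWithin_of_tendsto_nhds tendsto_id) ?_ (by norm_num [hΔt.ne'])
    exact tendsto_const_nhds.mul (by simpa using h1.pow 2)
  · refine tendsto_const_nhds.sub ?_
    have hinv : Tendsto (fun ε : ℝ => 1/ε) l atTop := by
      simpa using tendsto_inv_nhdsGT_zero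
    have harg : Tendsto (fun ε : ℝ => (1 + ε * φ) * Δt * (1/ε * (1/ε))) l atTop := by
      have hC : Tendsto (fun ε : ℝ => (1 + ε * φ) * Δt) l (nhds (1 * Δt)) := by
        simpa using h1.mul_const Δt
      exact Tendsto.pos_mul_atTop (by simpa using hΔt) hC (hinv.atTop_mul_atTop₀ hinv)
    have harg' : Tendsto (fun ε : ℝ => -(1 + ε * φ) * Δt / ε^2) l atBot := by
      apply Tendsto.congr' _ (tendsto_neg_atTop_atBot.comp harg)
      filter_upwards [hεpos] with ε hε
      have hε' : ε ≠ 0 := ne_of_gt hε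
      simp only [Function.comp_apply]
      field_simp
    exact Real.tendsto_exp_atBot.comp harg'
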